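/- Let n and r be integers with 1 ≤ r ≤ n − 2. Every finite simple graph G on n vertices with vertex connectivity exactly r satisfies H(G) ≤ H(K(n−1,r)), with equality if and only if G is isomorphic to K(n−1,r). -/

import Mathlib

open SimpleGraph

/-- The Harary index of a finite simple graph: sum of reciprocals of distances over
unordered pairs of distinct vertices (pairs at infinite distance contribute `0`,
since `SimpleGraph.dist` is `0` there and `1/0 = 0` in `ℝ`). -/
noncomputable def hararyIndex {V : Type*} [Fintype V] (G : SimpleGraph V) : ℝ :=
  (∑ u : V, ∑ v : V, (1 : ℝ) / (G.dist u v)) / 2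

/-- The graph `K(n-1, r)` on `n` vertices: a complete graph `K_{n-1}` on the first
`n - 1` vertices, together with one extra vertex (the last one) joined to exactly the
first `r` vertices of the `K_{n-1}`. -/
def Knr (n r : ℕ) : SimpleGraph (Fin n) :=
  SimpleGraph.fromRel (fun a b =>
    ((a : ℕ) < n - 1 ∧ (b : ℕ) < n - 1) ∨ ((a : ℕ) = n - 1 ∧ (b : ℕ) < r))

/-- The vertex connectivity of `G`: the least number of vertices whose deletion yields
a disconnected graph or a single vertex. -/
noncomputable def vertexConnectivity {V : Type*} [Fintype V] (G : SimpleGraph V) : ℕ :=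
  sInf {k | ∃ S : Set V, S.ncard = k ∧
    (¬ (G.induce (Sᶜ : Set V)).Connected ∨ (Sᶜ : Set V).ncard = 1)}

/-! Every pair of distinct vertices contributes at most `1` to `H(G)`, and a non-adjacent pair at
most `1/2`, so `H(G) ≤ C(n,2) - e(Gᶜ)/2`, with equality when all non-adjacent pairs are at
distance `2`. Removing a minimum vertex cut `S` (`|S| = r`) leaves nonempty parts `A`, `B` with no
edges between them, so `Gᶜ` contains the complete bipartite graph between `A` and `B` and
`e(Gᶜ) ≥ |A||B| ≥ |A| + |B| - 1 = n - r - 1`. The complement of `K(n-1,r)` is a star with exactly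
`n - r - 1` edges, and `K(n-1,r)` has a universal vertex, so it attains the bound. Conversely,
equality forces `Gᶜ` to be that complete bipartite graph with `|A||B| = |A| + |B| - 1`, so one
side is a single vertex: `Gᶜ` is a star with `n - r - 1` leaves, hence `G ≅ K(n-1,r)`. -/

open Finset

namespace SimpleGraph

variable {V W : Type*} {G : SimpleGraph V} {H : SimpleGraph W}

theorem Hom.edist_le (f : G →g H) (u v : V) : H.edist (f u) (f v) ≤ G.edist u v :=
  le_iInf fun p => Walk.length_map f p ▸ SimpleGraph.edist_le (p.map f)

theorem Iso.edist_eq (f : G ≃g H) (u v : V) : H.edist (f u) (f v) = G.edist u v :=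
  le_antisymm (f.toHom.edist_le u v) (by simpa using f.symm.toHom.edist_le (f u) (f v))

theorem Iso.dist_eq (f : G ≃g H) (u v : V) : H.dist (f u) (f v) = G.dist u v := by
  simp only [dist, f.edist_eq]

theorem dist_eq_two_of_isUniversal {c u v : V} (hc : G.IsUniversal c) (huv : u ≠ v)
    (hadj : ¬G.Adj u v) : G.dist u v = 2 := by
  have hcu : c ≠ u := by rintro rfl; exact hadj (hc huv)
  have hcv : c ≠ v := by rintro rfl; exact hadj (hc huv.symm).symm
  have h : G.edist u v = 2 :=
    edist_eq_two_iff.mpr ⟨huv, hadj, c, (hc hcu).symm, (hc hcv).symm⟩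
  simp [dist, h]

theorem card_edgeFinset_top_between [DecidableEq V] {A B : Finset V}
    [Fintype ((⊤ : SimpleGraph V).between A B).edgeSet] (hAB : Disjoint A B) :
    #((⊤ : SimpleGraph V).between A B).edgeFinset = #A * #B := by
  have hdisj := Finset.disjoint_left.mp hAB
  have hedges :
      ((⊤ : SimpleGraph V).between A B).edgeFinset = (A ×ˢ B).image fun p => s(p.1, p.2) := by
    ext e
    induction e using Sym2.ind with
    | _ x y =>
      simp only [mem_edgeFinset, mem_edgeSet, between_adj, top_adj, mem_image, mem_product,
        Prod.exists, Sym2.eq_iff, mem_coe]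
      grind
  rw [hedges, card_image_of_injOn, card_product]
  rintro ⟨a, b⟩ hab ⟨a', b'⟩ hab' h
  simp only [coe_product, Set.mem_prod, mem_coe, Sym2.eq_iff] at hab hab' h
  grind

section Separation

variable [Fintype V]

theorem exists_separation_of_not_connected_induce {s : Set V} (hs : s.Nonempty)
    (h : ¬(G.induce s).Connected) :
    ∃ A B : Finset V, A.Nonempty ∧ B.Nonempty ∧ Disjoint A B ∧ #A + #B = s.ncard ∧
      (⊤ : SimpleGraph V).between A B ≤ Gᶜ := by
  classical
  have : Nonempty s := hs.to_subtype
  obtain ⟨x, y, hxy⟩ : ∃ x y : s, ¬(G.induce s).Reachable x y := by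
    simpa [connected_iff, Preconnected] using h
  let P : Finset s := univ.filter fun z => (G.induce s).Reachable x z
  refine ⟨P.map (Function.Embedding.subtype _), Pᶜ.map (Function.Embedding.subtype _),
    ⟨x, by simp [P]⟩, ⟨y, by simp [P, hxy]⟩, ?_, ?_, ?_⟩
  · exact (disjoint_map _).mpr disjoint_compl_right
  · rw [card_map, card_map, card_add_card_compl, Set.fintypeCard_eq_ncard]
  · have key : ∀ a b : s, (G.induce s).Reachable x a → ¬(G.induce s).Reachable x b →
        Gᶜ.Adj a b := fun a b ha hb =>
      (compl_adj G a b).mpr ⟨fun h => hb (Subtype.ext h ▸ ha),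
        fun h => hb (ha.trans (Adj.reachable (by simpa using h)))⟩
    rintro a b ⟨-, hab⟩
    simp only [coe_map, Function.Embedding.subtype_apply, Set.mem_image, mem_coe, mem_compl,
      P, mem_filter, mem_univ, true_and] at hab
    rcases hab with ⟨⟨a, ha, rfl⟩, b, hb, rfl⟩ | ⟨⟨a, ha, rfl⟩, b, hb, rfl⟩
    · exact key a b ha hb
    · exact (key b a hb ha).symm

variable [DecidableEq V] [DecidableRel G.Adj] {A B : Finset V}

theorem card_add_card_sub_one_le_card_edgeFinset_compl (hA : A.Nonempty) (hB : B.Nonempty)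
    (hAB : Disjoint A B) (hsep : (⊤ : SimpleGraph V).between A B ≤ Gᶜ) :
    #A + #B - 1 ≤ #Gᶜ.edgeFinset := by
  have h := card_le_card (edgeFinset_mono hsep)
  rw [card_edgeFinset_top_between hAB] at h
  have := hA.card_pos
  have := hB.card_pos
  have : #A + #B ≤ #A * #B + 1 := by nlinarith
  omega

theorem exists_eq_compl_top_between_singleton (hA : A.Nonempty) (hB : B.Nonempty)
    (hAB : Disjoint A B) (hsep : (⊤ : SimpleGraph V).between A B ≤ Gᶜ)
    (hG : #Gᶜ.edgeFinset ≤ #A + #B - 1) :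
    ∃ v B', v ∉ B' ∧ #B' = #A + #B - 1 ∧
      G = ((⊤ : SimpleGraph V).between ({v} : Finset V) B')ᶜ := by
  have hcard := card_edgeFinset_top_between hAB
  have hle := card_le_card (edgeFinset_mono hsep)
  have hA1 := hA.card_pos
  have hB1 := hB.card_pos
  have hone : #A = 1 ∨ #B = 1 := by
    by_contra! h
    have := Nat.add_le_mul (a := #A) (b := #B) (by omega) (by omega)
    omega
  have hGc : (⊤ : SimpleGraph V).between A B = Gᶜ := by
    refine edgeFinset_inj.mp (eq_of_subset_of_card_le (edgeFinset_mono hsep) ?_)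
    rcases hone with h | h <;> simp only [h, one_mul, mul_one] at hcard <;> omega
  rcases hone with h | h
  · obtain ⟨v, rfl⟩ := card_eq_one.mp h
    exact ⟨v, B, disjoint_singleton_left.mp hAB, by simp, by rw [hGc, compl_compl]⟩
  · obtain ⟨v, rfl⟩ := card_eq_one.mp h
    rw [between_comm] at hGc
    exact ⟨v, A, disjoint_singleton_right.mp hAB, by simp, by rw [hGc, compl_compl]⟩

end Separation

end SimpleGraph

open Classical in
theorem Fintype.card_subtype_mem_pair_eq {V : Type*} [Fintype V] {A B : Finset V}
    (hAB : Disjoint A B) (p q : Prop) :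
    Fintype.card {x // (x ∈ A, x ∈ B) = (p, q)} =
      if p then (if q then 0 else #A) else (if q then #B else Fintype.card V - (#A + #B)) := by
  rw [Fintype.card_subtype]
  have := Finset.disjoint_left.mp hAB
  by_cases hp : p <;> by_cases hq : q <;>
    simp only [hp, hq, if_true, if_false, Prod.mk.injEq, eq_iff_iff, iff_true, iff_false]
  · simpa [Finset.card_eq_zero, Finset.filter_eq_empty_iff] using this
  · congr 1; ext x; simpa using @this x
  · congr 1; ext x; simpa using fun h h' => this h' h
  · rw [← card_union_of_disjoint hAB, ← card_compl]; congr 1; ext x; simp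

open Classical in
theorem exists_equiv_forall_mem_iff {V W : Type*} [Fintype V] [Fintype W] {A B : Finset V}
    {A' B' : Finset W} (hAB : Disjoint A B) (hAB' : Disjoint A' B') (hA : #A = #A')
    (hB : #B = #B') (hVW : Fintype.card V = Fintype.card W) :
    ∃ e : V ≃ W, ∀ x, (e x ∈ A' ↔ x ∈ A) ∧ (e x ∈ B' ↔ x ∈ B) := by
  have hfiber : ∀ c : Prop × Prop,
      Fintype.card {x // (x ∈ A, x ∈ B) = c} = Fintype.card {y // (y ∈ A', y ∈ B') = c} := by
    rintro ⟨p, q⟩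
    rw [Fintype.card_subtype_mem_pair_eq hAB, Fintype.card_subtype_mem_pair_eq hAB', hA, hB, hVW]
  refine ⟨Equiv.ofFiberEquiv fun c => Fintype.equivOfCardEq (hfiber c), fun x => ?_⟩
  have h := Equiv.ofFiberEquiv_map (fun c => Fintype.equivOfCardEq (hfiber c)) x
  simp only [Prod.mk.injEq] at h
  exact ⟨Iff.of_eq h.1, Iff.of_eq h.2⟩

theorem SimpleGraph.nonempty_iso_compl_top_between {V W : Type*} [Fintype V] [Fintype W]
    {A B : Finset V} {A' B' : Finset W} (hAB : Disjoint A B) (hAB' : Disjoint A' B')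
    (hA : #A = #A') (hB : #B = #B') (hVW : Fintype.card V = Fintype.card W) :
    Nonempty (((⊤ : SimpleGraph V).between A B)ᶜ ≃g ((⊤ : SimpleGraph W).between A' B')ᶜ) := by
  obtain ⟨e, he⟩ := exists_equiv_forall_mem_iff hAB hAB' hA hB hVW
  exact ⟨⟨e, by simp [between_adj, he]⟩⟩

section Harary

variable {V : Type*} [DecidableEq V]

theorem one_div_dist_le (G : SimpleGraph V) [DecidableRel G.Adj] (u v : V) :
    1 / (G.dist u v : ℝ) ≤ (if u = v then 0 else 1) - if Gᶜ.Adj u v then 1 / 2 else 0 := by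
  by_cases huv : u = v
  · simp [huv]
  by_cases hadj : G.Adj u v
  · simp [huv, hadj, dist_eq_one_iff_adj.mpr hadj]
  have hd : G.dist u v ≠ 1 := fun h => hadj (dist_eq_one_iff_adj.mp h)
  rcases Nat.eq_zero_or_pos (G.dist u v) with h0 | hpos
  · norm_num [huv, hadj, h0]
  · have h2 : (2 : ℝ) ≤ G.dist u v := by exact_mod_cast (by omega : 2 ≤ G.dist u v)
    simp only [huv, hadj, compl_adj, ne_eq, not_false_eq_true, and_self, if_true, if_false]
    rw [div_le_iff₀ (by linarith)]
    linarith

theorem one_div_dist_eq_of_dist_eq_two (G : SimpleGraph V) [DecidableRel G.Adj] (u v : V)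
    (h : Gᶜ.Adj u v → G.dist u v = 2) :
    1 / (G.dist u v : ℝ) = (if u = v then 0 else 1) - if Gᶜ.Adj u v then 1 / 2 else 0 := by
  by_cases huv : u = v
  · simp [huv]
  by_cases hadj : G.Adj u v
  · simp [huv, hadj, dist_eq_one_iff_adj.mpr hadj]
  · have hc : Gᶜ.Adj u v := (compl_adj G u v).mpr ⟨huv, hadj⟩
    norm_num [huv, hc, h hc]

variable [Fintype V]

theorem sum_sum_ite_sub_ite_compl_adj (G : SimpleGraph V) [DecidableRel G.Adj] :
    ∑ u, ∑ v, ((if u = v then 0 else 1) - if Gᶜ.Adj u v then 1 / 2 else 0 : ℝ) =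
      2 * ((Fintype.card V).choose 2 - #Gᶜ.edgeFinset / 2) := by
  have hdeg : ∀ u, ∑ v, (if Gᶜ.Adj u v then 1 / 2 else 0 : ℝ) = Gᶜ.degree u / 2 := by
    intro u
    rw [← card_neighborFinset_eq_degree, neighborFinset_eq_filter, Finset.sum_ite,
      sum_const_zero, sum_const, nsmul_eq_mul]
    ring
  have hne : ∀ u : V, ∑ v, (if u = v then 0 else 1 : ℝ) = Fintype.card V - 1 := by
    intro u
    simp [Finset.sum_ite, filter_ne, Nat.cast_pred (Fintype.card_pos_iff.mpr ⟨u⟩)]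
  have hsum : ∑ u, (Gᶜ.degree u : ℝ) = 2 * #Gᶜ.edgeFinset := by
    exact_mod_cast sum_degrees_eq_twice_card_edges Gᶜ
  simp only [Finset.sum_sub_distrib, hdeg, hne, ← Finset.sum_div, hsum, Nat.cast_choose_two]
  simp
  ring

theorem hararyIndex_le (G : SimpleGraph V) [DecidableRel G.Adj] :
    hararyIndex G ≤ (Fintype.card V).choose 2 - #Gᶜ.edgeFinset / 2 := by
  have h := Finset.sum_le_sum fun u (_ : u ∈ univ) =>
    Finset.sum_le_sum fun v (_ : v ∈ univ) => one_div_dist_le G u v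
  rw [sum_sum_ite_sub_ite_compl_adj] at h
  unfold hararyIndex
  linarith

theorem hararyIndex_eq_of_dist_eq_two (G : SimpleGraph V) [DecidableRel G.Adj]
    (h : ∀ u v, Gᶜ.Adj u v → G.dist u v = 2) :
    hararyIndex G = (Fintype.card V).choose 2 - #Gᶜ.edgeFinset / 2 := by
  unfold hararyIndex
  simp_rw [fun u v => one_div_dist_eq_of_dist_eq_two G u v (h u v),
    sum_sum_ite_sub_ite_compl_adj]
  ring

end Harary

theorem hararyIndex_congr {V W : Type*} [Fintype V] [Fintype W] {G : SimpleGraph V}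
    {H : SimpleGraph W} (f : G ≃g H) : hararyIndex G = hararyIndex H := by
  unfold hararyIndex
  congr 1
  refine Fintype.sum_equiv f.toEquiv _ _ fun u => Fintype.sum_equiv f.toEquiv _ _ fun v => ?_
  simp [f.dist_eq]

theorem exists_separation_of_vertexConnectivity_eq {V : Type*} [Fintype V] {G : SimpleGraph V}
    {r : ℕ} (hconn : vertexConnectivity G = r) (hr : r + 2 ≤ Fintype.card V) :
    ∃ A B : Finset V, A.Nonempty ∧ B.Nonempty ∧ Disjoint A B ∧ #A + #B = Fintype.card V - r ∧
      (⊤ : SimpleGraph V).between A B ≤ Gᶜ := by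
  rw [vertexConnectivity] at hconn
  obtain ⟨S, hS, hcut⟩ := hconn ▸ Nat.sInf_mem (by
    exact ⟨_, Set.univ, rfl, Or.inl fun h => by simpa using h.nonempty⟩)
  have hSc : Sᶜ.ncard = Fintype.card V - r := by
    rw [Set.ncard_compl, hS, Nat.card_eq_fintype_card]
  simpa [hSc] using exists_separation_of_not_connected_induce
    (Set.nonempty_of_ncard_ne_zero (by omega)) (hcut.resolve_right (by omega))

theorem compl_Knr_succ {m r : ℕ} (hrm : r ≤ m) :
    (Knr (m + 1) r)ᶜ = (⊤ : SimpleGraph (Fin (m + 1))).between ({Fin.last m} : Finset _)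
      (Finset.Ico ⟨r, by omega⟩ (Fin.last m)) := by
  ext a b
  simp [Knr, between_adj, Fin.ext_iff, Fin.lt_def, Fin.le_iff_val_le_val]
  omega

theorem isUniversal_Knr_succ_zero {m r : ℕ} (hr : 1 ≤ r) : (Knr (m + 1) r).IsUniversal 0 := by
  intro w hw
  simp [Knr, Fin.ext_iff] at hw ⊢
  omega

theorem hararyIndex_Knr_succ {m r : ℕ} (hr : 1 ≤ r) (hrm : r ≤ m) :
    hararyIndex (Knr (m + 1) r) = (m + 1).choose 2 - (m - r : ℕ) / 2 := by
  classical
  have hE : #(Knr (m + 1) r)ᶜ.edgeFinset = m - r := by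
    rw [edgeFinset_inj.mpr (compl_Knr_succ hrm), card_edgeFinset_top_between (by simp)]
    simp
  rw [hararyIndex_eq_of_dist_eq_two _ fun u v h =>
    dist_eq_two_of_isUniversal (isUniversal_Knr_succ_zero hr) h.1 h.2, hE, Fintype.card_fin]

theorem nonempty_iso_Knr_succ {V : Type*} [Fintype V] [DecidableEq V] {m r : ℕ} {v : V}
    {B : Finset V} (hv : v ∉ B) (hB : #B = m - r) (hV : Fintype.card V = m + 1) (hrm : r ≤ m) :
    Nonempty (((⊤ : SimpleGraph V).between ({v} : Finset V) B)ᶜ ≃g Knr (m + 1) r) := by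
  rw [← compl_compl (Knr (m + 1) r), compl_Knr_succ hrm]
  exact nonempty_iso_compl_top_between (by simpa) (by simp) (by simp) (by simp [hB])
    (by simp [hV])

/-- For `1 ≤ r ≤ n − 2`, `K(n−1, r)` is the unique maximizer of the Harary index among
graphs of order `n` with vertex connectivity `r`. -/
theorem harary_le_Knr_of_vertexConnectivity (n r : ℕ) (hr : 1 ≤ r) (hrn : r + 2 ≤ n)
    {V : Type*} [Fintype V] (G : SimpleGraph V) (hcard : Fintype.card V = n)
    (hconn : vertexConnectivity G = r) :
    hararyIndex G ≤ hararyIndex (Knr n r) ∧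
      (hararyIndex G = hararyIndex (Knr n r) ↔ Nonempty (G ≃g Knr n r)) := by
  classical
  obtain ⟨m, rfl⟩ : ∃ m, n = m + 1 := ⟨n - 1, by omega⟩
  obtain ⟨A, B, hA, hB, hAB, hsize, hsep⟩ :=
    exists_separation_of_vertexConnectivity_eq hconn (hcard ▸ hrn)
  have hlow := card_add_card_sub_one_le_card_edgeFinset_compl hA hB hAB hsep
  have hm : #A + #B - 1 = m - r := by omega
  have hG := hararyIndex_le G
  rw [hcard] at hG
  have hK := hararyIndex_Knr_succ hr (by omega : r ≤ m)
  refine ⟨?_, fun heq => ?_, fun ⟨f⟩ => hararyIndex_congr f⟩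
  · have : ((m - r : ℕ) : ℝ) ≤ #Gᶜ.edgeFinset := by exact_mod_cast hm ▸ hlow
    linarith
  · have : (#Gᶜ.edgeFinset : ℝ) ≤ (m - r : ℕ) := by linarith
    obtain ⟨v, B', hv, hB', rfl⟩ :=
      exists_eq_compl_top_between_singleton hA hB hAB hsep (hm ▸ by exact_mod_cast this)
    exact nonempty_iso_Knr_succ hv (hB'.trans hm) hcard (by omega)
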